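/- Let K be a field and M an n×n unimodular matrix with nonnegative integer entries and columns m^{(1)},…,m^{(n)}. Let g_1,…,g_r ∈ K[x_1,…,x_n] be nonzero polynomials such that, for each i, In_u g_i is the same polynomial for all u = Mλ with λ ∈ (ℝ_{>0})^n, and write g_i∘φ_{M^t} = x^{P_i}·h_i with P_i ∈ ℕ^n and h_i(0) ≠ 0. Fix s ∈ {1,…,n} and a vector w = λ_1 m^{(1)} + ⋯ + λ_s m^{(s)} with all λ_i > 0. If y = (0,…,0,y_{s+1},…,y_n) ∈ K^n with y_j ≠ 0 for j > s satisfies h_i(y) = 0 for all i, then the point z = φ_{M^t}(1,…,1,y_{s+1},…,y_n) lies in (K^*)^n and satisfies (In_w g_i)(z) = 0 for all i; in particular the ideal ⟨In_w g_1,…,In_w g_r⟩ has a common zero in the torus (K^*)^n. -/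

import Mathlib

open MvPolynomial Matrix

open Classical in
/-- The `w`-initial part of a multivariate polynomial: the sum of the terms whose
exponents have minimal `w`-weight among the exponents of `f`. -/
noncomputable def initialPart {n : ℕ} {K : Type*} [CommSemiring K] (w : Fin n → ℝ)
    (f : MvPolynomial (Fin n) K) : MvPolynomial (Fin n) K :=
  ∑ μ ∈ f.support,
    if ∀ ν ∈ f.support, ∑ i, w i * (μ i : ℝ) ≤ ∑ i, w i * (ν i : ℝ)
    then monomial μ (f.coeff μ) else 0

/-- The monomial substitution `φ_M` on polynomials: `x_i ↦ ∏_j x_j ^ (M j i)`,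
so that `x^μ ↦ x^(Mμ)`. -/
noncomputable def monomialSubst {n : ℕ} {K : Type*} [CommSemiring K]
    (M : Matrix (Fin n) (Fin n) ℕ) (f : MvPolynomial (Fin n) K) : MvPolynomial (Fin n) K :=
  aeval (fun i => ∏ j, (X j : MvPolynomial (Fin n) K) ^ M j i) f

/-- A nonnegative integer square matrix is unimodular if its determinant (over `ℤ`) is `±1`. -/
def IsUnimodular {n : ℕ} (M : Matrix (Fin n) (Fin n) ℕ) : Prop :=
  (M.map fun a => (a : ℤ)).det = 1 ∨ (M.map fun a => (a : ℤ)).det = -1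

/-!
Substituting `x ↦ x^{Mᵀ}` relabels exponents by the injective map `μ ↦ Mᵀμ` and turns the
weight `Mλ` into `λ`, so it carries `In_{Mλ} g` to `In_λ (x^P h) = x^P In_λ h`. As `h(0) ≠ 0`
and `λ ≥ 0` is positive exactly on the first `s` coordinates, `In_λ h` consists of the terms
of `h` free of `x_1, …, x_s`. These are blind to the first `s` coordinates of the point and
are all that survives of `h` at `y`, so `In_{Mλ} g (z) = y'^P · h(y) = 0` with
`y' = (1, …, 1, y_{s+1}, …, y_n)`.
-/

section ExponentRelabelling

variable {σ K : Type*} [CommSemiring K] {E : (σ →₀ ℕ) → σ →₀ ℕ}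

theorem coeff_mapDomain_apply (hE : Function.Injective E) (f : MvPolynomial σ K) (μ : σ →₀ ℕ) :
    coeff (E μ) (AddMonoidAlgebra.mapDomain E f : MvPolynomial σ K) = coeff μ f := by
  simp [MvPolynomial.coeff, hE]

theorem coeff_mapDomain_of_notMem_range (f : MvPolynomial σ K) {ν : σ →₀ ℕ}
    (hν : ν ∉ Set.range E) :
    coeff ν (AddMonoidAlgebra.mapDomain E f : MvPolynomial σ K) = 0 := by
  simp only [MvPolynomial.coeff, AddMonoidAlgebra.coeff_mapDomain]
  exact Finsupp.mapDomain_of_notMem_range _ _ hν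

theorem support_mapDomain [DecidableEq σ] (hE : Function.Injective E) (f : MvPolynomial σ K) :
    support (AddMonoidAlgebra.mapDomain E f : MvPolynomial σ K) = f.support.image E := by
  simp [MvPolynomial.support, Finsupp.mapDomain_support_of_injective hE]

theorem monomial_one_mul_eq_mapDomain (P : σ →₀ ℕ) (q : MvPolynomial σ K) :
    monomial P 1 * q = (AddMonoidAlgebra.mapDomain (P + ·) q : MvPolynomial σ K) := by
  induction q using MvPolynomial.induction_on' with
  | monomial u a =>
    rw [monomial_mul, one_mul]
    exact (AddMonoidAlgebra.mapDomain_single (R := K)).symm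
  | add p q hp hq => rw [mul_add, hp, hq, AddMonoidAlgebra.mapDomain_add]

end ExponentRelabelling

section MonomialSubst

variable {n : ℕ} {K : Type*} [CommSemiring K]

noncomputable def expMulVec (M : Matrix (Fin n) (Fin n) ℕ) (μ : Fin n →₀ ℕ) : Fin n →₀ ℕ :=
  Finsupp.equivFunOnFinite.symm (M *ᵥ ⇑μ)

theorem expMulVec_injective {M : Matrix (Fin n) (Fin n) ℕ}
    (hM : (M.map ((↑) : ℕ → ℤ)).det ≠ 0) : Function.Injective (expMulVec M) := by
  intro μ ν hμν
  have hcast : ∀ κ : Fin n →₀ ℕ,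
      M.map ((↑) : ℕ → ℤ) *ᵥ (fun i => (κ i : ℤ)) = fun j => (expMulVec M κ j : ℤ) := by
    intro κ
    ext j
    simp [expMulVec, Matrix.mulVec, dotProduct]
  have hcast_eq : M.map ((↑) : ℕ → ℤ) *ᵥ (fun i => (μ i : ℤ)) =
      M.map ((↑) : ℕ → ℤ) *ᵥ (fun i => (ν i : ℤ)) := by
    rw [hcast, hcast, hμν]
  ext i
  exact_mod_cast congrFun (mulVec_injective_of_det_ne_zero hM hcast_eq) i

theorem prod_prod_pow_eq_prod_pow_mulVec {α : Type*} [CommMonoid α]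
    (A : Matrix (Fin n) (Fin n) ℕ) (x : Fin n → α) (μ : Fin n → ℕ) :
    ∏ i, (∏ j, x j ^ A j i) ^ μ i = ∏ j, x j ^ (A *ᵥ μ) j := by
  simp only [← Finset.prod_pow, ← pow_mul, Matrix.mulVec, dotProduct]
  rw [Finset.prod_comm]
  simp only [Finset.prod_pow_eq_pow_sum]

theorem monomialSubst_monomial (M : Matrix (Fin n) (Fin n) ℕ) (μ : Fin n →₀ ℕ) (a : K) :
    monomialSubst M (monomial μ a) = monomial (expMulVec M μ) a := by
  rw [monomialSubst, aeval_monomial, monomial_eq, algebraMap_eq,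
    Finsupp.prod_fintype _ _ fun _ => pow_zero _, Finsupp.prod_fintype _ _ fun _ => pow_zero _,
    prod_prod_pow_eq_prod_pow_mulVec]
  rfl

theorem monomialSubst_eq_mapDomain (M : Matrix (Fin n) (Fin n) ℕ)
    (f : MvPolynomial (Fin n) K) :
    monomialSubst M f =
      (AddMonoidAlgebra.mapDomain (expMulVec M) f : MvPolynomial (Fin n) K) := by
  induction f using MvPolynomial.induction_on' with
  | monomial μ a =>
    rw [monomialSubst_monomial]
    exact (AddMonoidAlgebra.mapDomain_single (R := K)).symm
  | add p q hp hq =>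
    rw [monomialSubst, map_add, ← monomialSubst, ← monomialSubst, hp, hq,
      AddMonoidAlgebra.mapDomain_add]

theorem eval_monomialSubst (M : Matrix (Fin n) (Fin n) ℕ) (y : Fin n → K)
    (f : MvPolynomial (Fin n) K) :
    eval y (monomialSubst M f) = eval (fun i => ∏ j, y j ^ M j i) f := by
  rw [monomialSubst, aeval_eq_bind₁, eval, eval₂Hom_bind₁]
  simp

end MonomialSubst

section InitialPart

variable {n : ℕ} {K : Type*} [CommSemiring K]

def weight (w : Fin n → ℝ) (μ : Fin n →₀ ℕ) : ℝ := ∑ i, w i * (μ i : ℝ)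

theorem weight_add (w : Fin n → ℝ) (μ ν : Fin n →₀ ℕ) :
    weight w (μ + ν) = weight w μ + weight w ν := by
  simp only [weight, Finsupp.coe_add, Pi.add_apply, Nat.cast_add, mul_add,
    Finset.sum_add_distrib]

theorem weight_mulVec (M : Matrix (Fin n) (Fin n) ℕ) (lam : Fin n → ℝ) (μ : Fin n →₀ ℕ) :
    weight (M.map ((↑) : ℕ → ℝ) *ᵥ lam) μ = weight lam (expMulVec Mᵀ μ) := by
  simp only [weight, expMulVec, Finsupp.coe_equivFunOnFinite_symm, Matrix.mulVec, dotProduct,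
    Matrix.map_apply, Matrix.transpose_apply, Nat.cast_sum, Nat.cast_mul, Finset.sum_mul,
    Finset.mul_sum]
  rw [Finset.sum_comm]
  exact Finset.sum_congr rfl fun _ _ => Finset.sum_congr rfl fun _ _ => by ring

theorem weight_nonneg {lam : Fin n → ℝ} (hlam : ∀ j, 0 ≤ lam j) (τ : Fin n →₀ ℕ) :
    0 ≤ weight lam τ :=
  Finset.sum_nonneg fun j _ => mul_nonneg (hlam j) (Nat.cast_nonneg _)

theorem weight_eq_zero_iff {lam : Fin n → ℝ} (hlam : ∀ j, 0 ≤ lam j) {τ : Fin n →₀ ℕ} :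
    weight lam τ = 0 ↔ ∀ j, 0 < lam j → τ j = 0 := by
  rw [weight,
    Finset.sum_eq_zero_iff_of_nonneg fun j _ => mul_nonneg (hlam j) (Nat.cast_nonneg _)]
  simp only [Finset.mem_univ, true_implies, mul_eq_zero, Nat.cast_eq_zero]
  exact forall_congr' fun j =>
    ⟨fun h hj => h.resolve_left hj.ne', fun h => (hlam j).eq_or_lt.imp Eq.symm h⟩

open Classical in
theorem coeff_initialPart (w : Fin n → ℝ) (f : MvPolynomial (Fin n) K) (μ : Fin n →₀ ℕ) :
    coeff μ (initialPart w f) =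
      if ∀ ν ∈ f.support, weight w μ ≤ weight w ν then coeff μ f else 0 := by
  rw [initialPart, coeff_sum, Finset.sum_eq_single μ]
  · simp only [apply_ite (coeff μ), coeff_monomial, if_true, coeff_zero]
    rfl
  · intro ν _ hν
    simp [apply_ite (coeff μ), coeff_monomial, hν]
  · intro hμ
    simp [notMem_support_iff.1 hμ]

theorem initialPart_mapDomain {E : (Fin n →₀ ℕ) → Fin n →₀ ℕ} (hE : Function.Injective E)
    {w lam : Fin n → ℝ} (c : ℝ) (hw : ∀ μ, weight lam (E μ) = weight w μ + c)
    (f : MvPolynomial (Fin n) K) :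
    initialPart lam (AddMonoidAlgebra.mapDomain E f : MvPolynomial (Fin n) K) =
      AddMonoidAlgebra.mapDomain E (initialPart w f) := by
  classical
  ext ν
  by_cases hν : ν ∈ Set.range E
  · obtain ⟨μ, rfl⟩ := hν
    rw [coeff_initialPart, coeff_mapDomain_apply hE, coeff_mapDomain_apply hE,
      coeff_initialPart, support_mapDomain hE]
    simp only [Finset.forall_mem_image, hw, add_le_add_iff_right]
  · rw [coeff_initialPart, coeff_mapDomain_of_notMem_range _ hν,
      coeff_mapDomain_of_notMem_range _ hν, ite_self]

theorem initialPart_monomialSubst {M : Matrix (Fin n) (Fin n) ℕ}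
    (hM : (M.map ((↑) : ℕ → ℤ)).det ≠ 0) (lam : Fin n → ℝ) (f : MvPolynomial (Fin n) K) :
    monomialSubst Mᵀ (initialPart (M.map ((↑) : ℕ → ℝ) *ᵥ lam) f) =
      initialPart lam (monomialSubst Mᵀ f) := by
  have hMt : (Mᵀ.map ((↑) : ℕ → ℤ)).det ≠ 0 := by
    rwa [Matrix.transpose_map, Matrix.det_transpose]
  rw [monomialSubst_eq_mapDomain, monomialSubst_eq_mapDomain,
    initialPart_mapDomain (expMulVec_injective hMt) 0 fun μ => by rw [weight_mulVec, add_zero]]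

theorem initialPart_monomial_one_mul (w : Fin n → ℝ) (P : Fin n →₀ ℕ)
    (q : MvPolynomial (Fin n) K) :
    initialPart w (monomial P 1 * q) = monomial P 1 * initialPart w q := by
  rw [monomial_one_mul_eq_mapDomain, monomial_one_mul_eq_mapDomain,
    initialPart_mapDomain (add_right_injective P) (weight w P) fun μ => by
      rw [weight_add, add_comm]]

open Classical in
theorem initialPart_eq_sum_weight_eq_zero {lam : Fin n → ℝ} (hlam : ∀ j, 0 ≤ lam j)
    {q : MvPolynomial (Fin n) K} (hq : coeff 0 q ≠ 0) :
    initialPart lam q =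
      ∑ τ ∈ q.support, if weight lam τ = 0 then monomial τ (coeff τ q) else 0 := by
  refine Finset.sum_congr rfl fun τ _ => if_congr ⟨fun hmin => ?_, fun h0 ν _ => ?_⟩ rfl rfl
  · have hle : weight lam τ ≤ weight lam 0 := hmin 0 (mem_support_iff.2 hq)
    exact le_antisymm (by simpa [weight] using hle) (weight_nonneg hlam τ)
  · exact h0.trans_le (weight_nonneg hlam ν)

theorem eval_initialPart_of_coeff_zero_ne_zero {lam : Fin n → ℝ} (hlam : ∀ j, 0 ≤ lam j)
    {q : MvPolynomial (Fin n) K} (hq : coeff 0 q ≠ 0) {y y' : Fin n → K}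
    (hy : ∀ j, 0 < lam j → y j = 0) (hy' : ∀ j, lam j = 0 → y' j = y j) :
    eval y' (initialPart lam q) = eval y q := by
  classical
  conv_rhs => rw [q.as_sum]
  rw [initialPart_eq_sum_weight_eq_zero hlam hq, map_sum, map_sum]
  refine Finset.sum_congr rfl fun τ _ => ?_
  split_ifs with hτ
  · rw [eval_monomial, eval_monomial]
    refine congrArg _ (Finsupp.prod_congr fun j _ => ?_)
    rcases (hlam j).eq_or_lt with hj | hj
    · rw [hy' j hj.symm]
    · rw [(weight_eq_zero_iff hlam).1 hτ j hj, pow_zero, pow_zero]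
  · obtain ⟨j, hj, hτj⟩ : ∃ j, 0 < lam j ∧ τ j ≠ 0 := by
      simpa [weight_eq_zero_iff hlam] using hτ
    rw [map_zero, eval_monomial, Finsupp.prod,
      Finset.prod_eq_zero (Finsupp.mem_support_iff.2 hτj) (by rw [hy j hj, zero_pow hτj]),
      mul_zero]

end InitialPart

theorem orbit_point_gives_torus_zero_of_initials_general {n r : ℕ} {K : Type*} [Field K]
    (M : Matrix (Fin n) (Fin n) ℕ) (hM : IsUnimodular M)
    (g : Fin r → MvPolynomial (Fin n) K)
    (P : Fin r → (Fin n →₀ ℕ)) (h : Fin r → MvPolynomial (Fin n) K)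
    (hfac : ∀ i, monomialSubst Mᵀ (g i) = monomial (P i) 1 * h i)
    (hh0 : ∀ i, eval (0 : Fin n → K) (h i) ≠ 0)
    (s : ℕ)
    (lam : Fin n → ℝ) (hlam : ∀ i : Fin n, ((i : ℕ) < s → 0 < lam i) ∧ (s ≤ (i : ℕ) → lam i = 0))
    (y : Fin n → K)
    (hy0 : ∀ j : Fin n, (j : ℕ) < s → y j = 0)
    (hy1 : ∀ j : Fin n, s ≤ (j : ℕ) → y j ≠ 0)
    (hyz : ∀ i, eval y (h i) = 0) :
    (∀ i : Fin n, (∏ j : Fin n, (if (j : ℕ) < s then 1 else y j) ^ M i j) ≠ 0) ∧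
      ∀ i : Fin r,
        eval (fun i' : Fin n => ∏ j : Fin n, (if (j : ℕ) < s then 1 else y j) ^ M i' j)
          (initialPart ((M.map ((↑) : ℕ → ℝ)).mulVec lam) (g i)) = 0 := by
  set y' : Fin n → K := fun j => if (j : ℕ) < s then 1 else y j
  have hy'_ne : ∀ j, y' j ≠ 0 := fun j => by
    by_cases hj : (j : ℕ) < s
    · simp [y', hj]
    · simpa [y', hj] using hy1 j (not_lt.1 hj)
  refine ⟨fun i => Finset.prod_ne_zero_iff.2 fun j _ => pow_ne_zero _ (hy'_ne j), fun i => ?_⟩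
  have hdet : (M.map ((↑) : ℕ → ℤ)).det ≠ 0 := by rcases hM with hM | hM <;> simp [hM]
  have hlam_nonneg : ∀ j, 0 ≤ lam j := fun j => by
    by_cases hj : (j : ℕ) < s
    · exact ((hlam j).1 hj).le
    · exact ((hlam j).2 (not_lt.1 hj)).ge
  have hlam_pos : ∀ j, 0 < lam j → y j = 0 := fun j hj =>
    hy0 j (by_contra fun hjs => hj.ne' ((hlam j).2 (not_lt.1 hjs)))
  have hlam_zero : ∀ j, lam j = 0 → y' j = y j := fun j hj =>
    if_neg fun hjs => ((hlam j).1 hjs).ne' hj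
  have hq : coeff 0 (h i) ≠ 0 := by simpa [constantCoeff_eq] using hh0 i
  calc eval (fun i' => ∏ j, y' j ^ M i' j) (initialPart (M.map (↑) *ᵥ lam) (g i))
      = eval y' (monomialSubst Mᵀ (initialPart (M.map (↑) *ᵥ lam) (g i))) := by
        rw [eval_monomialSubst]; rfl
    _ = eval y' (monomial (P i) 1) * eval y' (initialPart lam (h i)) := by
        rw [initialPart_monomialSubst hdet, hfac, initialPart_monomial_one_mul, eval_mul]
    _ = 0 := by
        rw [eval_initialPart_of_coeff_zero_ne_zero hlam_nonneg hq hlam_pos hlam_zero, hyz,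
          mul_zero]

/-- Let `M` be a nonnegative unimodular matrix whose column cone is good for
each of the nonzero polynomials `g_1, …, g_r`, and write `g_i ∘ φ_{Mᵀ} = x^{P_i} · h_i`
with `h_i(0) ≠ 0`.  Let `w = λ_1 m^{(1)} + ⋯ + λ_s m^{(s)}` be a positive combination of
the first `s` columns of `M`.  If `y = (0,…,0,y_{s+1},…,y_n)` (with `y_j ≠ 0` for `j > s`)
is a common zero of the `h_i`, then the point `z = φ_{Mᵀ}(1,…,1,y_{s+1},…,y_n)` lies in
the torus `(K^*)^n` and is a common zero of the initial parts `In_w g_i`. -/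
theorem orbit_point_gives_torus_zero_of_initials {n r : ℕ} {K : Type*} [Field K]
    (M : Matrix (Fin n) (Fin n) ℕ) (hM : IsUnimodular M)
    (g : Fin r → MvPolynomial (Fin n) K) (hg : ∀ i, g i ≠ 0)
    (hgood : ∀ i, ∀ lam lam' : Fin n → ℝ, (∀ j, 0 < lam j) → (∀ j, 0 < lam' j) →
      initialPart ((M.map ((↑) : ℕ → ℝ)).mulVec lam) (g i) =
        initialPart ((M.map ((↑) : ℕ → ℝ)).mulVec lam') (g i))
    (P : Fin r → (Fin n →₀ ℕ)) (h : Fin r → MvPolynomial (Fin n) K)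
    (hfac : ∀ i, monomialSubst Mᵀ (g i) = monomial (P i) 1 * h i)
    (hh0 : ∀ i, eval (0 : Fin n → K) (h i) ≠ 0)
    (s : ℕ) (hs1 : 1 ≤ s) (hsn : s ≤ n)
    (lam : Fin n → ℝ) (hlam : ∀ i : Fin n, ((i : ℕ) < s → 0 < lam i) ∧ (s ≤ (i : ℕ) → lam i = 0))
    (y : Fin n → K)
    (hy0 : ∀ j : Fin n, (j : ℕ) < s → y j = 0)
    (hy1 : ∀ j : Fin n, s ≤ (j : ℕ) → y j ≠ 0)
    (hyz : ∀ i, eval y (h i) = 0) :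
    (∀ i : Fin n, (∏ j : Fin n, (if (j : ℕ) < s then 1 else y j) ^ M i j) ≠ 0) ∧
      ∀ i : Fin r,
        eval (fun i' : Fin n => ∏ j : Fin n, (if (j : ℕ) < s then 1 else y j) ^ M i' j)
          (initialPart ((M.map ((↑) : ℕ → ℝ)).mulVec lam) (g i)) = 0 :=
  orbit_point_gives_torus_zero_of_initials_general M hM g P h hfac hh0 s lam hlam y hy0 hy1 hyz
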